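/- Let q ≥ 5 be an odd prime power not divisible by 3, and let μ ∈ F_q^* with μ ≠ 1 and μ ≠ 1/9. Let N̄₁(μ) be the number of γ ∈ F_q such that the cubic t³ - 3γt² + 3μt - γ has exactly one root in F_q. Then the number of points of the line ℓ_μ lying in exactly one osculating plane of the twisted cubic equals N̄₁(μ) + 1 if q ≡ -1 (mod 3) and equals N̄₁(μ) if q ≡ 1 (mod 3). -/

import Mathlib

/-!
A point `⟨v⟩` lies in the osculating plane `π_osc(τ)` iff `v` does, and distinct parameters give
distinct planes, so the planes through `⟨v⟩` are counted by the parameters `τ` with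
`v ∈ π_osc(τ)`. For the affine points `⟨(γ, μ, γ, 1)⟩` of `ℓ_μ` these are exactly the roots of
`t³ - 3γt² + 3μt - γ`, which gives `N̄₁(μ)`. The point at infinity `⟨(1, 0, 1, 0)⟩` lies in
`π_osc(∞)` and in `π_osc(t)` for every root of `3t² + 1`; in odd characteristic `≠ 3` such a root
exists iff `F` contains a primitive cube root of unity (`ω = (3t - 1)/2`), i.e. iff `3 ∣ q - 1`.
-/

/-- The osculating plane `π_osc(t)` of the twisted cubic, as a subset of `F_q⁴`:
for `t ∈ F_q` it is `{x | x₀ - 3t·x₁ + 3t²·x₂ - t³·x₃ = 0}`, and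
`π_osc(∞)` is `{x | x₃ = 0}`. -/
def oscSet {F : Type*} [Field F] : Option F → Set (Fin 4 → F)
  | none => {x | x 3 = 0}
  | some t => {x | x 0 - 3 * t * x 1 + 3 * t ^ 2 * x 2 - t ^ 3 * x 3 = 0}

open Polynomial

section Arithmetic

lemma natCast_ne_zero_of_not_dvd_card {R : Type*} [Ring R] [Nontrivial R] [Fintype R] {p : ℕ}
    [Fact p.Prime] (h : ¬ p ∣ Fintype.card R) : (p : R) ≠ 0 := by
  intro hp
  apply h
  have h1 : addOrderOf (1 : R) = p := addOrderOf_eq_prime (by simpa using hp) one_ne_zero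
  exact h1 ▸ addOrderOf_dvd_card

variable {F : Type*} [Field F]

lemma exists_sq_add_self_add_one_eq_zero_iff [Fintype F] (h3 : (3 : F) ≠ 0) :
    (∃ ω : F, ω ^ 2 + ω + 1 = 0) ↔ 3 ∣ Fintype.card F - 1 := by
  classical
  have : NeZero ((3 : ℕ) : F) := ⟨by exact_mod_cast h3⟩
  have hroot (ω : F) : ω ^ 2 + ω + 1 = 0 ↔ IsPrimitiveRoot ω 3 := by
    rw [← isRoot_cyclotomic_iff, cyclotomic_three]
    simp
  simp only [hroot]
  constructor
  · rintro ⟨ω, hω⟩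
    rw [← Fintype.card_units, hω.eq_orderOf, ← IsUnit.unit_spec (hω.isUnit three_ne_zero),
      orderOf_units]
    exact orderOf_dvd_card
  · intro h
    rw [← Fintype.card_units] at h
    obtain ⟨u, hu⟩ := exists_prime_orderOf_dvd_card 3 h
    exact ⟨u, IsPrimitiveRoot.coe_units_iff.mpr (hu ▸ IsPrimitiveRoot.orderOf u)⟩

lemma exists_three_mul_sq_add_one_eq_zero_iff (h2 : (2 : F) ≠ 0) (h3 : (3 : F) ≠ 0) :
    (∃ t : F, 3 * t ^ 2 + 1 = 0) ↔ ∃ ω : F, ω ^ 2 + ω + 1 = 0 := by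
  constructor
  · rintro ⟨t, ht⟩
    refine ⟨(3 * t - 1) / 2, ?_⟩
    field_simp
    linear_combination 3 * ht
  · rintro ⟨ω, hω⟩
    refine ⟨(2 * ω + 1) / 3, ?_⟩
    field_simp
    linear_combination 4 * hω

end Arithmetic

section Counting

variable {R : Type*} [Semiring R] {ι : Type*}

lemma eq_of_span_singleton_eq_of_apply_eq_one {v w : ι → R} {i : ι} (hv : v i = 1)
    (hw : w i = 1) (h : Submodule.span R {v} = Submodule.span R {w}) : v = w := by
  obtain ⟨c, rfl⟩ := Submodule.mem_span_singleton.mp (h ▸ Submodule.mem_span_singleton_self v)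
  have hc : c = 1 := by simpa [hw] using hv
  rw [hc, one_smul]

lemma span_singleton_ne_of_apply_eq_zero {v w : ι → R} {i : ι} (hv : v i = 0) (hw : w i ≠ 0) :
    Submodule.span R {v} ≠ Submodule.span R {w} := by
  intro h
  obtain ⟨c, rfl⟩ := Submodule.mem_span_singleton.mp (h ▸ Submodule.mem_span_singleton_self w)
  simp [hv] at hw

lemma ncard_setOf_or_exists_and {α β : Type*} [Finite β] {f : β → α}
    (hf : Function.Injective f) {a : α} (ha : ∀ b, f b ≠ a) (P : α → Prop) [Decidable (P a)] :
    {x | (x = a ∨ ∃ b, x = f b) ∧ P x}.ncard = {b | P (f b)}.ncard + if P a then 1 else 0 := by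
  have hnot : a ∉ f '' {b | P (f b)} := fun ⟨b, _, hb⟩ ↦ ha b hb
  split_ifs with hPa
  · have : {x | (x = a ∨ ∃ b, x = f b) ∧ P x} = insert a (f '' {b | P (f b)}) := by
      ext x
      constructor
      · rintro ⟨rfl | ⟨b, rfl⟩, hx⟩
        exacts [Set.mem_insert _ _, Or.inr ⟨b, hx, rfl⟩]
      · rintro (rfl | ⟨b, hb, rfl⟩)
        exacts [⟨Or.inl rfl, hPa⟩, ⟨Or.inr ⟨b, rfl⟩, hb⟩]
    rw [this, Set.ncard_insert_of_notMem hnot (Set.toFinite _),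
      Set.ncard_image_of_injective _ hf]
  · have : {x | (x = a ∨ ∃ b, x = f b) ∧ P x} = f '' {b | P (f b)} := by
      ext x
      constructor
      · rintro ⟨rfl | ⟨b, rfl⟩, hx⟩
        exacts [absurd hx hPa, ⟨b, hx, rfl⟩]
      · rintro ⟨b, hb, rfl⟩
        exact ⟨Or.inr ⟨b, rfl⟩, hb⟩
    rw [this, Set.ncard_image_of_injective _ hf, add_zero]

end Counting

section OsculatingPlanes

variable {F : Type*} [Field F]

lemma smul_mem_oscSet {τ : Option F} {v : Fin 4 → F} (hv : v ∈ oscSet τ) (c : F) :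
    c • v ∈ oscSet τ := by
  cases τ <;>
  · simp only [oscSet, Set.mem_ofPred_eq, Pi.smul_apply, smul_eq_mul] at hv ⊢
    linear_combination c * hv

lemma span_singleton_subset_oscSet_iff {τ : Option F} {v : Fin 4 → F} :
    ((Submodule.span F {v} : Submodule F (Fin 4 → F)) : Set (Fin 4 → F)) ⊆ oscSet τ ↔
      v ∈ oscSet τ := by
  refine ⟨fun h ↦ h (Submodule.mem_span_singleton_self v), fun h x hx ↦ ?_⟩
  obtain ⟨c, rfl⟩ := Submodule.mem_span_singleton.mp hx
  exact smul_mem_oscSet h c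

lemma oscSet_injective : Function.Injective (oscSet (F := F)) := by
  have h0 : ![1, 0, 0, 0] ∈ oscSet (none : Option F) := by simp [oscSet]
  rintro (_ | t) (_ | s) h
  · rfl
  · have := h ▸ h0
    simp [oscSet] at this
  · have := h ▸ h0
    simp [oscSet] at this
  · -- the point `P(t)` of the cubic lies in `π_osc(s)` iff `(t - s)³ = 0`
    have ht : ![t ^ 3, t ^ 2, t, 1] ∈ oscSet (some t) := by
      simp only [oscSet, Set.mem_ofPred_eq, Matrix.cons_val]
      ring
    have hts := h ▸ ht
    simp only [oscSet, Set.mem_ofPred_eq, Matrix.cons_val, mul_one] at hts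
    have : (t - s) ^ 3 = 0 := by linear_combination hts
    rw [sub_eq_zero.mp (pow_eq_zero_iff three_ne_zero |>.mp this)]

lemma ncard_oscSet_superset_span_singleton (v : Fin 4 → F) :
    {π : Set (Fin 4 → F) | (∃ τ : Option F, π = oscSet τ) ∧
      ((Submodule.span F {v} : Submodule F (Fin 4 → F)) : Set (Fin 4 → F)) ⊆ π}.ncard =
      {τ : Option F | v ∈ oscSet τ}.ncard := by
  have : {π : Set (Fin 4 → F) | (∃ τ : Option F, π = oscSet τ) ∧
      ((Submodule.span F {v} : Submodule F (Fin 4 → F)) : Set (Fin 4 → F)) ⊆ π} =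
      oscSet '' {τ | v ∈ oscSet τ} := by
    ext π
    constructor
    · rintro ⟨⟨τ, rfl⟩, hτ⟩
      exact ⟨τ, span_singleton_subset_oscSet_iff.mp hτ, rfl⟩
    · rintro ⟨τ, hτ, rfl⟩
      exact ⟨⟨τ, rfl⟩, span_singleton_subset_oscSet_iff.mpr hτ⟩
  rw [this, Set.ncard_image_of_injective _ oscSet_injective]

lemma ncard_setOf_mem_oscSet_affinePoint (γ μ : F) :
    {τ : Option F | ![γ, μ, γ, 1] ∈ oscSet τ}.ncard =
      {t : F | t ^ 3 - 3 * γ * t ^ 2 + 3 * μ * t - γ = 0}.ncard := by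
  have : {τ : Option F | ![γ, μ, γ, 1] ∈ oscSet τ} =
      some '' {t : F | t ^ 3 - 3 * γ * t ^ 2 + 3 * μ * t - γ = 0} := by
    ext (_ | t)
    · simp [oscSet]
    · simp only [oscSet, Set.mem_ofPred_eq, Set.mem_image, Option.some.injEq, exists_eq_right]
      simp only [Matrix.cons_val, mul_one]
      constructor <;> intro h <;> linear_combination -h
  rw [this, Set.ncard_image_of_injective _ (Option.some_injective F)]

lemma ncard_setOf_mem_oscSet_pointAtInfinity_eq_one_iff [Finite F] :
    {τ : Option F | ![1, 0, 1, 0] ∈ oscSet τ}.ncard = 1 ↔ ∀ t : F, 3 * t ^ 2 + 1 ≠ 0 := by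
  have : {τ : Option F | ![1, 0, 1, 0] ∈ oscSet τ} =
      insert none (some '' {t : F | 3 * t ^ 2 + 1 = 0}) := by
    ext (_ | t)
    · simp [oscSet]
    · simp only [oscSet, Set.mem_ofPred_eq, Set.mem_insert_iff, Set.mem_image, reduceCtorEq,
        Option.some.injEq, exists_eq_right, false_or]
      simp only [Matrix.cons_val, mul_zero]
      constructor <;> intro h <;> linear_combination h
  rw [this, Set.ncard_insert_of_notMem (by simp) (Set.toFinite _),
    Set.ncard_image_of_injective _ (Option.some_injective F), add_eq_right,
    Set.ncard_eq_zero (Set.toFinite _), Set.eq_empty_iff_forall_notMem]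
  exact Iff.rfl

end OsculatingPlanes

theorem stmt19_general (q : ℕ) (hodd : Odd q) (h3 : ¬ (3 ∣ q))
    (F : Type*) [Field F] [Fintype F] (hcard : Fintype.card F = q)
    (μ : F) :
    let linePts : Set (Submodule F (Fin 4 → F)) :=
      {p | p = Submodule.span F {![1, 0, 1, 0]} ∨
        ∃ γ : F, p = Submodule.span F {![γ, μ, γ, 1]}}
    let numOsc : Submodule F (Fin 4 → F) → ℕ := fun p =>
      Set.ncard {π : Set (Fin 4 → F) |
        (∃ τ : Option F, π = oscSet τ) ∧ (p : Set (Fin 4 → F)) ⊆ π}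
    let N1 : ℕ := Set.ncard {γ : F |
      ({t : F | t ^ 3 - 3 * γ * t ^ 2 + 3 * μ * t - γ = 0} : Set F).ncard = 1}
    (q % 3 = 2 → Set.ncard {p ∈ linePts | numOsc p = 1} = N1 + 1) ∧
    (q % 3 = 1 → Set.ncard {p ∈ linePts | numOsc p = 1} = N1) := by
  intro linePts numOsc N1
  classical
  have hF2 : (2 : F) ≠ 0 := by
    exact_mod_cast natCast_ne_zero_of_not_dvd_card (p := 2) (hcard ▸ hodd.not_two_dvd_nat)
  have hF3 : (3 : F) ≠ 0 := by
    exact_mod_cast natCast_ne_zero_of_not_dvd_card (p := 3) (hcard ▸ h3)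
  have hinf : numOsc (Submodule.span F {![1, 0, 1, 0]}) = 1 ↔ ¬ 3 ∣ q - 1 := by
    simp only [numOsc, ncard_oscSet_superset_span_singleton,
      ncard_setOf_mem_oscSet_pointAtInfinity_eq_one_iff, ← hcard,
      ← exists_sq_add_self_add_one_eq_zero_iff hF3,
      ← exists_three_mul_sq_add_one_eq_zero_iff hF2 hF3, not_exists]
  have hcount : {p ∈ linePts | numOsc p = 1}.ncard =
      N1 + if numOsc (Submodule.span F {![1, 0, 1, 0]}) = 1 then 1 else 0 := by
    refine (ncard_setOf_or_exists_and (fun γ γ' h ↦ ?_) (fun γ ↦ ?_) _).trans ?_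
    · simpa using congrFun (eq_of_span_singleton_eq_of_apply_eq_one (i := 3) rfl rfl h) 0
    · exact (span_singleton_ne_of_apply_eq_zero (i := 3) rfl one_ne_zero).symm
    · simp only [numOsc, N1, ncard_oscSet_superset_span_singleton,
        ncard_setOf_mem_oscSet_affinePoint]
  rw [hcount]
  constructor <;> intro hq <;> simp only [hinf] <;> split_ifs <;> omega

/-- Let `q ≥ 5` be an odd prime power not divisible by `3`, and
`μ ∈ F_q^*` with `μ ≠ 1`, `μ ≠ 1/9`. Let `N̄₁(μ)` be the number of `γ ∈ F_q` such that
`t³ - 3γt² + 3μt - γ` has exactly one root in `F_q`. Then the number of points of the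
line `ℓ_μ` lying in exactly one osculating plane of the twisted cubic equals
`N̄₁(μ) + 1` if `q ≡ -1 (mod 3)` and equals `N̄₁(μ)` if `q ≡ 1 (mod 3)`. -/
theorem stmt19 (q : ℕ) (hq5 : 5 ≤ q) (hodd : Odd q) (h3 : ¬ (3 ∣ q))
    (F : Type*) [Field F] [Fintype F] (hcard : Fintype.card F = q)
    (μ : F) (hμ0 : μ ≠ 0) (hμ1 : μ ≠ 1) (hμ9 : μ ≠ 1 / 9) :
    let linePts : Set (Submodule F (Fin 4 → F)) :=
      {p | p = Submodule.span F {![1, 0, 1, 0]} ∨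
        ∃ γ : F, p = Submodule.span F {![γ, μ, γ, 1]}}
    let numOsc : Submodule F (Fin 4 → F) → ℕ := fun p =>
      Set.ncard {π : Set (Fin 4 → F) |
        (∃ τ : Option F, π = oscSet τ) ∧ (p : Set (Fin 4 → F)) ⊆ π}
    let N1 : ℕ := Set.ncard {γ : F |
      ({t : F | t ^ 3 - 3 * γ * t ^ 2 + 3 * μ * t - γ = 0} : Set F).ncard = 1}
    (q % 3 = 2 → Set.ncard {p ∈ linePts | numOsc p = 1} = N1 + 1) ∧
    (q % 3 = 1 → Set.ncard {p ∈ linePts | numOsc p = 1} = N1) :=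
  stmt19_general q hodd h3 F hcard μ
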